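/- arXiv:1010.3379 — 4 statements merged into one kernel-verified Lean document; each statement's English description precedes it below -/
import Mathlib

section
/- Let J be a closed two-sided ideal in a C*-algebra C with J² dense in J (equivalently, J = closure of J·J, which holds automatically for C*-ideals), and suppose Δ : C → C ⊗ C satisfies Δ(J) ⊆ J ⊗ C and Δ(J) ⊆ C ⊗ J, where J ⊗ C, C ⊗ J, J ⊗ J denote closed ideals in the minimal tensor product. Then Δ(J) ⊆ J ⊗ J. -/
/-! If `J` is the closed span of `J · J`, then `Δ(J)` lies in the closure of the span of the products
`Δ a * Δ b` with `a, b ∈ J`; each of these lies in `I₁ · I₂ ⊆ I₃`, and `I₃` is a closed ideal. -/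

theorem map_mem_of_mem_span_mul {R A B F : Type*} [CommSemiring R] [Semiring A] [Semiring B]
    [Algebra R A] [Algebra R B] [FunLike F A B] [AlgHomClass F R A B] (f : F) (s : Set A)
    (I₁ I₂ I₃ : Ideal B) (hmul : ∀ x ∈ I₁, ∀ y ∈ I₂, x * y ∈ I₃)
    (h₁ : ∀ a ∈ s, f a ∈ I₁) (h₂ : ∀ a ∈ s, f a ∈ I₂) :
    ∀ x ∈ Submodule.span R {x : A | ∃ a ∈ s, ∃ b ∈ s, x = a * b}, f x ∈ I₃ := by
  intro x hx
  induction hx using Submodule.span_induction with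
  | mem y hy =>
    obtain ⟨a, ha, b, hb, rfl⟩ := hy
    rw [map_mul]
    exact hmul _ (h₁ a ha) _ (h₂ b hb)
  | zero => simp
  | add y z _ _ hy hz => simpa only [map_add] using I₃.add_mem hy hz
  | smul c y _ hy =>
    rw [map_smul, Algebra.smul_def]
    exact I₃.mul_mem_left _ hy

theorem stmt_7_general
    (C T : Type) [NormedRing C] [StarRing C] [NormedAlgebra ℂ C]
    [NormedRing T] [StarRing T] [NormedAlgebra ℂ T]
    (J : Ideal C)
    (hJsq : (J : Set C) ⊆
      closure ((Submodule.span ℂ {x : C | ∃ a ∈ J, ∃ b ∈ J, x = a * b} : Submodule ℂ C) : Set C))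
    (Δ : C →⋆ₐ[ℂ] T) (hΔcont : Continuous Δ)
    (I₁ I₂ I₃ : Ideal T)
    (hI₃closed : IsClosed (I₃ : Set T))
    (hmul : ∀ x ∈ I₁, ∀ y ∈ I₂, x * y ∈ I₃)
    (h₁ : ∀ a ∈ J, Δ a ∈ I₁) (h₂ : ∀ a ∈ J, Δ a ∈ I₂) :
    ∀ a ∈ J, Δ a ∈ I₃ := by
  intro a ha
  have hspan : Set.MapsTo Δ _ (I₃ : Set T) := map_mem_of_mem_span_mul Δ J I₁ I₂ I₃ hmul h₁ h₂
  exact hI₃closed.closure_subset (map_mem_closure hΔcont (hJsq ha) hspan)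

/-- Let `J` be a closed two-sided ideal in a C*-algebra `C` with `J²` dense
in `J`, and let `Δ : C → T` be a (continuous, unital) *-homomorphism into a C*-algebra `T`
(modeling the minimal tensor product `C ⊗ C`).  Suppose `I₁, I₂, I₃` are closed two-sided
ideals of `T` (modeling `J ⊗ C`, `C ⊗ J` and `J ⊗ J`) with `I₁ · I₂ ⊆ I₃`, and that
`Δ(J) ⊆ I₁` and `Δ(J) ⊆ I₂`.  Then `Δ(J) ⊆ I₃`. -/
theorem stmt_7
    (C T : Type) [NormedRing C] [StarRing C] [CStarRing C] [NormedAlgebra ℂ C]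
    [StarModule ℂ C] [CompleteSpace C]
    [NormedRing T] [StarRing T] [CStarRing T] [NormedAlgebra ℂ T]
    [StarModule ℂ T] [CompleteSpace T]
    (J : Ideal C) (hJclosed : IsClosed (J : Set C))
    (hJright : ∀ a ∈ J, ∀ c : C, a * c ∈ J)
    (hJsq : (J : Set C) ⊆
      closure ((Submodule.span ℂ {x : C | ∃ a ∈ J, ∃ b ∈ J, x = a * b} : Submodule ℂ C) : Set C))
    (Δ : C →⋆ₐ[ℂ] T) (hΔcont : Continuous Δ)
    (I₁ I₂ I₃ : Ideal T)
    (hI₁closed : IsClosed (I₁ : Set T)) (hI₂closed : IsClosed (I₂ : Set T))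
    (hI₃closed : IsClosed (I₃ : Set T))
    (hI₁right : ∀ x ∈ I₁, ∀ t : T, x * t ∈ I₁)
    (hI₂right : ∀ x ∈ I₂, ∀ t : T, x * t ∈ I₂)
    (hI₃right : ∀ x ∈ I₃, ∀ t : T, x * t ∈ I₃)
    (hmul : ∀ x ∈ I₁, ∀ y ∈ I₂, x * y ∈ I₃)
    (h₁ : ∀ a ∈ J, Δ a ∈ I₁) (h₂ : ∀ a ∈ J, Δ a ∈ I₂) :
    ∀ a ∈ J, Δ a ∈ I₃ :=
  stmt_7_general C T J hJsq Δ hΔcont I₁ I₂ I₃ hI₃closed hmul h₁ h₂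
end

section
/- Let X be the topological space given by the disjoint union of the 2-sphere S² and a two-point discrete space. Then X does not admit the structure of a topological group; i.e., there is no topological group G whose underlying topological space is homeomorphic to X. -/
open Metric

/-!
A topological group is homogeneous: left translations act transitively by homeomorphisms. So if one
point of a topological group is isolated, every point is, and the group is discrete. In `S² ⊕ Bool`
the points of `Bool` are isolated, yet the space is not discrete, because the sphere is connected
and has more than one point.
-/

theorem Homeomorph.discreteTopology_of_isOpen_singleton {G X : Type*} [Group G]
    [TopologicalSpace G] [ContinuousMul G] [TopologicalSpace X] (e : G ≃ₜ X) {x : X}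
    (hx : IsOpen ({x} : Set X)) : DiscreteTopology X := by
  have : DiscreteTopology G :=
    (MulAction.IsPretransitive.discreteTopology_iff G (e.symm x)).mpr <| by
      simpa using e.symm.isOpenMap _ hx
  exact e.symm.isEmbedding.discreteTopology

theorem Sum.not_discreteTopology_of_preconnectedSpace {α β : Type*} [TopologicalSpace α]
    [TopologicalSpace β] [PreconnectedSpace α] [Nontrivial α] : ¬ DiscreteTopology (α ⊕ β) :=
  fun _ ↦
    have : DiscreteTopology α := (Topology.IsEmbedding.inl (Y := β)).discreteTopology
    not_subsingleton α PreconnectedSpace.trivial_of_discrete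

theorem Sum.isOpen_singleton_inr {α β : Type*} [TopologicalSpace α] [TopologicalSpace β]
    [DiscreteTopology β] (b : β) : IsOpen ({Sum.inr b} : Set (α ⊕ β)) := by
  simpa using Topology.IsOpenEmbedding.inr.isOpenMap {b} (isOpen_discrete _)

theorem NormedSpace.nontrivial_sphere_zero {E : Type*} [NormedAddCommGroup E] [NormedSpace ℝ E]
    [Nontrivial E] {r : ℝ} (hr : 0 < r) : Nontrivial (sphere (0 : E) r) := by
  obtain ⟨v, hv⟩ := (NormedSpace.sphere_nonempty (x := (0 : E))).mpr hr.le
  exact ⟨⟨v, hv⟩, -⟨v, hv⟩, ne_neg_of_mem_sphere ℝ hr.ne' _⟩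

/-- The disjoint union of the 2-sphere `S²` and a two-point discrete space
does not admit the structure of a topological group: no topological group is homeomorphic
to it. -/
theorem stmt_9 :
    ∀ (G : Type) [Group G] [TopologicalSpace G] [IsTopologicalGroup G],
      ¬ Nonempty (G ≃ₜ ((Metric.sphere (0 : EuclideanSpace ℝ (Fin 3)) 1) ⊕ Bool)) := by
  intro G _ _ _ ⟨e⟩
  have hrank : 1 < Module.rank ℝ (EuclideanSpace ℝ (Fin 3)) := by
    rw [← Module.finrank_eq_rank, finrank_euclideanSpace_fin]
    norm_num
  have : ConnectedSpace (sphere (0 : EuclideanSpace ℝ (Fin 3)) 1) :=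
    isConnected_iff_connectedSpace.mp (isConnected_sphere hrank 0 zero_le_one)
  have : Nontrivial (sphere (0 : EuclideanSpace ℝ (Fin 3)) 1) :=
    NormedSpace.nontrivial_sphere_zero one_pos
  exact Sum.not_discreteTopology_of_preconnectedSpace
    (e.discreteTopology_of_isOpen_singleton (Sum.isOpen_singleton_inr true))
end

section
/- Let A be a unital C*-algebra and p, q ∈ A projections. Then Δp := (p − 1) ⊗ p + 1 ⊗ 1 + p ⊗ (p − 1) is a projection in A ⊗ A, and similarly for q. Consequently, if C is the universal unital C*-algebra generated by two projections p, q, there is a unique unital *-homomorphism Δ : C → C ⊗ C with Δ(p) = (p − 1) ⊗ p + 1 ⊗ 1 + p ⊗ (p − 1) and Δ(q) = (q − 1) ⊗ q + 1 ⊗ 1 + q ⊗ (q − 1), and Δ is coassociative. -/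
/-!
Writing a projection as `a = (1 + u) / 2` with `u` a self-adjoint unitary, the element
`(a - 1) * b + 1 + a * (b - 1)` is `(1 + u * v) / 2`. Coassociativity is therefore just
associativity of the product `u * v * w`, and holds in any ring. When `a` and `b` commute the
element equals `a * b + (1 - a) * (1 - b)`, a sum of two orthogonal projections, hence a
projection; existence and uniqueness of `Δ` is then the universal property of `C`.
-/

theorem isStarProjection_iff_isSelfAdjoint_and {R : Type*} [Mul R] [Star R] {p : R} :
    IsStarProjection p ↔ IsSelfAdjoint p ∧ p * p = p :=
  isStarProjection_iff'.trans and_comm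

section DeltaElem

variable {R : Type*} [Ring R]

def deltaElem (a b : R) : R := (a - 1) * b + 1 + a * (b - 1)

theorem deltaElem_eq_mul_add_one_sub_mul_one_sub (a b : R) :
    deltaElem a b = a * b + (1 - a) * (1 - b) := by
  unfold deltaElem
  noncomm_ring

theorem deltaElem_assoc (a b c : R) :
    deltaElem (deltaElem a b) c = deltaElem a (deltaElem b c) := by
  unfold deltaElem
  noncomm_ring

theorem IsStarProjection.deltaElem [StarRing R] {a b : R} (ha : IsStarProjection a)
    (hb : IsStarProjection b) (hab : Commute a b) : IsStarProjection (deltaElem a b) := by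
  have hab' : Commute (1 - a) b := (Commute.one_left b).sub_left hab
  have horth : a * b * ((1 - a) * (1 - b)) = 0 := by
    calc a * b * ((1 - a) * (1 - b)) = a * (b * (1 - a)) * (1 - b) := by noncomm_ring
      _ = a * (1 - a) * (b * (1 - b)) := by rw [hab'.eq.symm]; noncomm_ring
      _ = 0 := by rw [ha.mul_one_sub_self, zero_mul]
  rw [deltaElem_eq_mul_add_one_sub_mul_one_sub]
  exact (ha.mul hb hab).add (ha.one_sub.mul hb.one_sub ((Commute.one_right _).sub_right hab'))
    horth

end DeltaElem

theorem IsStarProjection.deltaElem_map {R S F : Type*} [Mul R] [Star R] [Ring S] [StarRing S]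
    [FunLike F R S] [StarHomClass F R S] [MulHomClass F R S] {f g : F}
    (hfg : ∀ x y, f x * g y = g y * f x) {x : R} (hx : IsStarProjection x) :
    IsStarProjection (_root_.deltaElem (f x) (g x)) :=
  (hx.map f).deltaElem (hx.map g) (hfg x x)

theorem stmt_14_general
    (A T : Type) [NormedRing A] [StarRing A] [NormedAlgebra ℂ A]
    [NormedRing T] [StarRing T] [NormedAlgebra ℂ T]
    (p q : A) (hp : IsSelfAdjoint p ∧ p * p = p) (hq : IsSelfAdjoint q ∧ q * q = q)
    (i₁ i₂ : A →⋆ₐ[ℂ] T) (hcomm : ∀ x y : A, i₁ x * i₂ y = i₂ y * i₁ x)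
    (C T₂ T₃ : Type) [NormedRing C] [StarRing C] [NormedAlgebra ℂ C]
    [NormedRing T₂] [StarRing T₂] [CStarRing T₂] [NormedAlgebra ℂ T₂]
    [StarModule ℂ T₂] [CompleteSpace T₂]
    [NormedRing T₃] [StarRing T₃] [NormedAlgebra ℂ T₃]
    (P Q : C) (hP : IsSelfAdjoint P ∧ P * P = P) (hQ : IsSelfAdjoint Q ∧ Q * Q = Q)
    (hUP : ∀ (D : Type) [NormedRing D] [StarRing D] [CStarRing D] [NormedAlgebra ℂ D]
      [StarModule ℂ D] [CompleteSpace D] (a b : D),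
      (IsSelfAdjoint a ∧ a * a = a) → (IsSelfAdjoint b ∧ b * b = b) →
      ∃! φ : C →⋆ₐ[ℂ] D, φ P = a ∧ φ Q = b)
    (j₁ j₂ : C →⋆ₐ[ℂ] T₂) (hjcomm : ∀ x y : C, j₁ x * j₂ y = j₂ y * j₁ x)
    (k₁ k₂ k₃ : C →⋆ₐ[ℂ] T₃) :
    -- (1) `Δp` and `Δq` are projections in `A ⊗ A`
    (IsSelfAdjoint (i₁ (p - 1) * i₂ p + 1 + i₁ p * i₂ (p - 1)) ∧
     (i₁ (p - 1) * i₂ p + 1 + i₁ p * i₂ (p - 1)) * (i₁ (p - 1) * i₂ p + 1 + i₁ p * i₂ (p - 1))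
       = i₁ (p - 1) * i₂ p + 1 + i₁ p * i₂ (p - 1)) ∧
    (IsSelfAdjoint (i₁ (q - 1) * i₂ q + 1 + i₁ q * i₂ (q - 1)) ∧
     (i₁ (q - 1) * i₂ q + 1 + i₁ q * i₂ (q - 1)) * (i₁ (q - 1) * i₂ q + 1 + i₁ q * i₂ (q - 1))
       = i₁ (q - 1) * i₂ q + 1 + i₁ q * i₂ (q - 1)) ∧
    -- (2) existence and uniqueness of the comultiplication `Δ`
    (∃! Δ : C →⋆ₐ[ℂ] T₂,
      Δ P = j₁ (P - 1) * j₂ P + 1 + j₁ P * j₂ (P - 1) ∧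
      Δ Q = j₁ (Q - 1) * j₂ Q + 1 + j₁ Q * j₂ (Q - 1)) ∧
    -- coassociativity of `Δ`, expressed on the generators in the triple tensor model:
    -- `(Δ ⊗ id)(Δ P) = (id ⊗ Δ)(Δ P)` and likewise for `Q`
    (((k₁ (P - 1) * k₂ P + 1 + k₁ P * k₂ (P - 1)) - 1) * k₃ P + 1 +
        (k₁ (P - 1) * k₂ P + 1 + k₁ P * k₂ (P - 1)) * k₃ (P - 1)
      = k₁ (P - 1) * (k₂ (P - 1) * k₃ P + 1 + k₂ P * k₃ (P - 1)) + 1 +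
        k₁ P * ((k₂ (P - 1) * k₃ P + 1 + k₂ P * k₃ (P - 1)) - 1)) ∧
    (((k₁ (Q - 1) * k₂ Q + 1 + k₁ Q * k₂ (Q - 1)) - 1) * k₃ Q + 1 +
        (k₁ (Q - 1) * k₂ Q + 1 + k₁ Q * k₂ (Q - 1)) * k₃ (Q - 1)
      = k₁ (Q - 1) * (k₂ (Q - 1) * k₃ Q + 1 + k₂ Q * k₃ (Q - 1)) + 1 +
        k₁ Q * ((k₂ (Q - 1) * k₃ Q + 1 + k₂ Q * k₃ (Q - 1)) - 1)) := by
  simp only [map_sub, map_one, ← deltaElem.eq_1, ← isStarProjection_iff_isSelfAdjoint_and]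
    at hp hq hP hQ ⊢
  refine ⟨hp.deltaElem_map hcomm, hq.deltaElem_map hcomm, ?_,
    deltaElem_assoc _ _ _, deltaElem_assoc _ _ _⟩
  exact hUP T₂ _ _ (isStarProjection_iff_isSelfAdjoint_and.1 (hP.deltaElem_map hjcomm))
    (isStarProjection_iff_isSelfAdjoint_and.1 (hQ.deltaElem_map hjcomm))

/-- (1) For projections `p, q` in a unital C*-algebra `A`, the element
`Δp = (p − 1) ⊗ p + 1 ⊗ 1 + p ⊗ (p − 1)` is a projection in `A ⊗ A`.  (2) If `C` is the
universal unital C*-algebra generated by two projections `P, Q` (modeled via its universal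
property), there is a unique unital *-homomorphism `Δ : C → C ⊗ C` sending `P` and `Q` to
the corresponding elements, and `Δ` is coassociative.  C*-tensor products are modeled by a
C*-algebra together with unital *-homomorphisms of the factors with commuting ranges
(`x ⊗ y ↦ i₁ x * i₂ y`); coassociativity is the corresponding identity on the generators
in any model of the triple tensor product. -/
theorem stmt_14
    (A T : Type) [NormedRing A] [StarRing A] [CStarRing A] [NormedAlgebra ℂ A]
    [StarModule ℂ A] [CompleteSpace A]
    [NormedRing T] [StarRing T] [CStarRing T] [NormedAlgebra ℂ T]
    [StarModule ℂ T] [CompleteSpace T]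
    (p q : A) (hp : IsSelfAdjoint p ∧ p * p = p) (hq : IsSelfAdjoint q ∧ q * q = q)
    (i₁ i₂ : A →⋆ₐ[ℂ] T) (hcomm : ∀ x y : A, i₁ x * i₂ y = i₂ y * i₁ x)
    (C T₂ T₃ : Type) [NormedRing C] [StarRing C] [CStarRing C] [NormedAlgebra ℂ C]
    [StarModule ℂ C] [CompleteSpace C]
    [NormedRing T₂] [StarRing T₂] [CStarRing T₂] [NormedAlgebra ℂ T₂]
    [StarModule ℂ T₂] [CompleteSpace T₂]
    [NormedRing T₃] [StarRing T₃] [CStarRing T₃] [NormedAlgebra ℂ T₃]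
    [StarModule ℂ T₃] [CompleteSpace T₃]
    (P Q : C) (hP : IsSelfAdjoint P ∧ P * P = P) (hQ : IsSelfAdjoint Q ∧ Q * Q = Q)
    (hUP : ∀ (D : Type) [NormedRing D] [StarRing D] [CStarRing D] [NormedAlgebra ℂ D]
      [StarModule ℂ D] [CompleteSpace D] (a b : D),
      (IsSelfAdjoint a ∧ a * a = a) → (IsSelfAdjoint b ∧ b * b = b) →
      ∃! φ : C →⋆ₐ[ℂ] D, φ P = a ∧ φ Q = b)
    (j₁ j₂ : C →⋆ₐ[ℂ] T₂) (hjcomm : ∀ x y : C, j₁ x * j₂ y = j₂ y * j₁ x)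
    (k₁ k₂ k₃ : C →⋆ₐ[ℂ] T₃)
    (hkcomm₁₂ : ∀ x y : C, k₁ x * k₂ y = k₂ y * k₁ x)
    (hkcomm₁₃ : ∀ x y : C, k₁ x * k₃ y = k₃ y * k₁ x)
    (hkcomm₂₃ : ∀ x y : C, k₂ x * k₃ y = k₃ y * k₂ x) :
    -- (1) `Δp` and `Δq` are projections in `A ⊗ A`
    (IsSelfAdjoint (i₁ (p - 1) * i₂ p + 1 + i₁ p * i₂ (p - 1)) ∧
     (i₁ (p - 1) * i₂ p + 1 + i₁ p * i₂ (p - 1)) * (i₁ (p - 1) * i₂ p + 1 + i₁ p * i₂ (p - 1))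
       = i₁ (p - 1) * i₂ p + 1 + i₁ p * i₂ (p - 1)) ∧
    (IsSelfAdjoint (i₁ (q - 1) * i₂ q + 1 + i₁ q * i₂ (q - 1)) ∧
     (i₁ (q - 1) * i₂ q + 1 + i₁ q * i₂ (q - 1)) * (i₁ (q - 1) * i₂ q + 1 + i₁ q * i₂ (q - 1))
       = i₁ (q - 1) * i₂ q + 1 + i₁ q * i₂ (q - 1)) ∧
    -- (2) existence and uniqueness of the comultiplication `Δ`
    (∃! Δ : C →⋆ₐ[ℂ] T₂,
      Δ P = j₁ (P - 1) * j₂ P + 1 + j₁ P * j₂ (P - 1) ∧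
      Δ Q = j₁ (Q - 1) * j₂ Q + 1 + j₁ Q * j₂ (Q - 1)) ∧
    -- coassociativity of `Δ`, expressed on the generators in the triple tensor model:
    -- `(Δ ⊗ id)(Δ P) = (id ⊗ Δ)(Δ P)` and likewise for `Q`
    (((k₁ (P - 1) * k₂ P + 1 + k₁ P * k₂ (P - 1)) - 1) * k₃ P + 1 +
        (k₁ (P - 1) * k₂ P + 1 + k₁ P * k₂ (P - 1)) * k₃ (P - 1)
      = k₁ (P - 1) * (k₂ (P - 1) * k₃ P + 1 + k₂ P * k₃ (P - 1)) + 1 +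
        k₁ P * ((k₂ (P - 1) * k₃ P + 1 + k₂ P * k₃ (P - 1)) - 1)) ∧
    (((k₁ (Q - 1) * k₂ Q + 1 + k₁ Q * k₂ (Q - 1)) - 1) * k₃ Q + 1 +
        (k₁ (Q - 1) * k₂ Q + 1 + k₁ Q * k₂ (Q - 1)) * k₃ (Q - 1)
      = k₁ (Q - 1) * (k₂ (Q - 1) * k₃ Q + 1 + k₂ Q * k₃ (Q - 1)) + 1 +
        k₁ Q * ((k₂ (Q - 1) * k₃ Q + 1 + k₂ Q * k₃ (Q - 1)) - 1)) :=
  stmt_14_general A T p q hp hq i₁ i₂ hcomm C T₂ T₃ P Q hP hQ hUP j₁ j₂ hjcomm k₁ k₂ k₃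
end

section
/- Let C be the universal unital C*-algebra generated by two projections p, q. Then there is a unique unital *-homomorphism Γ : C → C ⊗ C with Γ(p) = p ⊗ p + (1 − p) ⊗ q and Γ(q) = q ⊗ p + (1 − q) ⊗ q, and Γ is coassociative: (Γ ⊗ id) ∘ Γ = (id ⊗ Γ) ∘ Γ. -/
/-! `a * b + (1 - a) * c` is a projection whenever the projection `a` commutes with the
projections `b` and `c`, because it is the sum of the orthogonal projections `a * b` and
`(1 - a) * c`. Hence the universal property of `C` produces `Γ`. Coassociativity is an identity
in any ring: `m a b c := a * b + (1 - a) * c` satisfies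
`m (m a b c) x y = m a (m b x y) (m c x y)`, which is what `(Γ ⊗ id) ∘ Γ = (id ⊗ Γ) ∘ Γ`
says on a generator. -/

namespace IsStarProjection

variable {R : Type*} [Ring R] [StarRing R] {a b c : R}

theorem mul_add_one_sub_mul (ha : IsStarProjection a) (hb : IsStarProjection b)
    (hc : IsStarProjection c) (hab : Commute a b) (hac : Commute a c) :
    IsStarProjection (a * b + (1 - a) * c) := by
  have hab' : Commute (1 - a) b := (Commute.one_left b).sub_left hab
  have hac' : Commute (1 - a) c := (Commute.one_left c).sub_left hac
  refine (ha.mul hb hab).add (ha.one_sub.mul hc hac') ?_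
  calc a * b * ((1 - a) * c) = a * (b * (1 - a)) * c := by simp only [mul_assoc]
    _ = a * (1 - a) * b * c := by rw [← hab'.eq]; simp only [mul_assoc]
    _ = 0 := by rw [ha.mul_one_sub_self, zero_mul, zero_mul]

end IsStarProjection

theorem mul_add_one_sub_mul_assoc {R : Type*} [Ring R] (a b c x y : R) :
    (a * b + (1 - a) * c) * x + (1 - (a * b + (1 - a) * c)) * y =
      a * (b * x + (1 - b) * y) + (1 - a) * (c * x + (1 - c) * y) := by
  noncomm_ring

theorem stmt_15_general
    (C T₂ T₃ : Type) [NormedRing C] [StarRing C] [NormedAlgebra ℂ C]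
    [NormedRing T₂] [StarRing T₂] [CStarRing T₂] [NormedAlgebra ℂ T₂]
    [StarModule ℂ T₂] [CompleteSpace T₂]
    [NormedRing T₃] [StarRing T₃] [NormedAlgebra ℂ T₃]
    (P Q : C) (hP : IsSelfAdjoint P ∧ P * P = P) (hQ : IsSelfAdjoint Q ∧ Q * Q = Q)
    (hUP : ∀ (D : Type) [NormedRing D] [StarRing D] [CStarRing D] [NormedAlgebra ℂ D]
      [StarModule ℂ D] [CompleteSpace D] (a b : D),
      (IsSelfAdjoint a ∧ a * a = a) → (IsSelfAdjoint b ∧ b * b = b) →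
      ∃! φ : C →⋆ₐ[ℂ] D, φ P = a ∧ φ Q = b)
    (j₁ j₂ : C →⋆ₐ[ℂ] T₂) (hjcomm : ∀ x y : C, j₁ x * j₂ y = j₂ y * j₁ x)
    (k₁ k₂ k₃ : C →⋆ₐ[ℂ] T₃) :
    -- existence and uniqueness of `Γ`
    (∃! Γ : C →⋆ₐ[ℂ] T₂,
      Γ P = j₁ P * j₂ P + j₁ (1 - P) * j₂ Q ∧
      Γ Q = j₁ Q * j₂ P + j₁ (1 - Q) * j₂ Q) ∧
    -- coassociativity `(Γ ⊗ id) ∘ Γ = (id ⊗ Γ) ∘ Γ` on the generators `P` and `Q`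
    ((k₁ P * k₂ P + k₁ (1 - P) * k₂ Q) * k₃ P +
        (1 - (k₁ P * k₂ P + k₁ (1 - P) * k₂ Q)) * k₃ Q
      = k₁ P * (k₂ P * k₃ P + k₂ (1 - P) * k₃ Q) +
        k₁ (1 - P) * (k₂ Q * k₃ P + k₂ (1 - Q) * k₃ Q)) ∧
    ((k₁ Q * k₂ P + k₁ (1 - Q) * k₂ Q) * k₃ P +
        (1 - (k₁ Q * k₂ P + k₁ (1 - Q) * k₂ Q)) * k₃ Q
      = k₁ Q * (k₂ P * k₃ P + k₂ (1 - P) * k₃ Q) +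
        k₁ (1 - Q) * (k₂ Q * k₃ P + k₂ (1 - Q) * k₃ Q)) := by
  have hP' : IsStarProjection P := ⟨hP.2, hP.1⟩
  have hQ' : IsStarProjection Q := ⟨hQ.2, hQ.1⟩
  have hΓ (X : C) (hX : IsStarProjection X) :
      IsStarProjection (j₁ X * j₂ P + (1 - j₁ X) * j₂ Q) :=
    (hX.map j₁).mul_add_one_sub_mul (hP'.map j₂) (hQ'.map j₂) (hjcomm X P) (hjcomm X Q)
  simp only [map_sub, map_one]
  refine ⟨hUP T₂ _ _ ⟨(hΓ P hP').2, (hΓ P hP').1⟩ ⟨(hΓ Q hQ').2, (hΓ Q hQ').1⟩,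
    mul_add_one_sub_mul_assoc .., mul_add_one_sub_mul_assoc ..⟩

/-- Let `C` be the universal unital C*-algebra generated by two projections
`P, Q` (modeled via its universal property).  There is a unique unital *-homomorphism
`Γ : C → C ⊗ C` with `Γ(P) = P ⊗ P + (1 − P) ⊗ Q` and `Γ(Q) = Q ⊗ P + (1 − Q) ⊗ Q`, and
`Γ` is coassociative.  C*-tensor products are modeled by a C*-algebra with unital
*-homomorphisms of the factors having commuting ranges (`x ⊗ y ↦ j₁ x * j₂ y`);
coassociativity `(Γ ⊗ id) ∘ Γ = (id ⊗ Γ) ∘ Γ` is expressed on the generators in any model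
of the triple tensor product. -/
theorem stmt_15
    (C T₂ T₃ : Type) [NormedRing C] [StarRing C] [CStarRing C] [NormedAlgebra ℂ C]
    [StarModule ℂ C] [CompleteSpace C]
    [NormedRing T₂] [StarRing T₂] [CStarRing T₂] [NormedAlgebra ℂ T₂]
    [StarModule ℂ T₂] [CompleteSpace T₂]
    [NormedRing T₃] [StarRing T₃] [CStarRing T₃] [NormedAlgebra ℂ T₃]
    [StarModule ℂ T₃] [CompleteSpace T₃]
    (P Q : C) (hP : IsSelfAdjoint P ∧ P * P = P) (hQ : IsSelfAdjoint Q ∧ Q * Q = Q)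
    (hUP : ∀ (D : Type) [NormedRing D] [StarRing D] [CStarRing D] [NormedAlgebra ℂ D]
      [StarModule ℂ D] [CompleteSpace D] (a b : D),
      (IsSelfAdjoint a ∧ a * a = a) → (IsSelfAdjoint b ∧ b * b = b) →
      ∃! φ : C →⋆ₐ[ℂ] D, φ P = a ∧ φ Q = b)
    (j₁ j₂ : C →⋆ₐ[ℂ] T₂) (hjcomm : ∀ x y : C, j₁ x * j₂ y = j₂ y * j₁ x)
    (k₁ k₂ k₃ : C →⋆ₐ[ℂ] T₃)
    (hkcomm₁₂ : ∀ x y : C, k₁ x * k₂ y = k₂ y * k₁ x)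
    (hkcomm₁₃ : ∀ x y : C, k₁ x * k₃ y = k₃ y * k₁ x)
    (hkcomm₂₃ : ∀ x y : C, k₂ x * k₃ y = k₃ y * k₂ x) :
    -- existence and uniqueness of `Γ`
    (∃! Γ : C →⋆ₐ[ℂ] T₂,
      Γ P = j₁ P * j₂ P + j₁ (1 - P) * j₂ Q ∧
      Γ Q = j₁ Q * j₂ P + j₁ (1 - Q) * j₂ Q) ∧
    -- coassociativity `(Γ ⊗ id) ∘ Γ = (id ⊗ Γ) ∘ Γ` on the generators `P` and `Q`
    ((k₁ P * k₂ P + k₁ (1 - P) * k₂ Q) * k₃ P +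
        (1 - (k₁ P * k₂ P + k₁ (1 - P) * k₂ Q)) * k₃ Q
      = k₁ P * (k₂ P * k₃ P + k₂ (1 - P) * k₃ Q) +
        k₁ (1 - P) * (k₂ Q * k₃ P + k₂ (1 - Q) * k₃ Q)) ∧
    ((k₁ Q * k₂ P + k₁ (1 - Q) * k₂ Q) * k₃ P +
        (1 - (k₁ Q * k₂ P + k₁ (1 - Q) * k₂ Q)) * k₃ Q
      = k₁ Q * (k₂ P * k₃ P + k₂ (1 - P) * k₃ Q) +
        k₁ (1 - Q) * (k₂ Q * k₃ P + k₂ (1 - Q) * k₃ Q)) :=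
  stmt_15_general C T₂ T₃ P Q hP hQ hUP j₁ j₂ hjcomm k₁ k₂ k₃
end
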